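/- arXiv:2212.12635 — 4 statements merged into one kernel-verified Lean document; each statement's English description precedes it below -/
import Mathlib

section
/- Let D be a squarefree positive integer with an even number of distinct prime factors and let N be a positive integer with gcd(D, N) = 1. Then there exists a positive integer L with L < 8DN such that: the Legendre symbol (L|p) equals −1 for every odd prime p dividing D; the Legendre symbol (L|p) equals 1 for every odd prime p dividing N; and L ≡ 5 (mod 8) if D is even, while L ≡ 1 (mod 8) if D is odd. -/
/-!
By the Chinese remainder theorem modulo `8` and the odd primes dividing `DN`, whose product
is at most `8DN`, one can prescribe `L` modulo `8` and modulo each such prime: a quadratic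
nonresidue modulo the odd primes dividing `D`, and `1` modulo the odd primes dividing `N` only.
-/

theorem exists_lt_two_pow_mul_modEq_and_natCast_eq (n k c : ℕ) (hn : n ≠ 0)
    (r : (p : ℕ) → ZMod p) :
    ∃ L < 2 ^ k * n, L ≡ c [MOD 2 ^ k] ∧
      ∀ p ∈ n.primeFactors, p ≠ 2 → (L : ZMod p) = r p := by
  classical
  set S := n.primeFactors.erase 2
  have hS : ∀ p ∈ S, p.Prime ∧ p ≠ 2 := fun p hp =>
    ⟨Nat.prime_of_mem_primeFactors (Finset.mem_of_mem_erase hp), Finset.ne_of_mem_erase hp⟩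
  have hcop : ∀ p ∈ S, Nat.Coprime (2 ^ k) p := fun p hp =>
    ((Nat.coprime_primes Nat.prime_two (hS p hp).1).mpr (hS p hp).2.symm).pow_left k
  have hpowS : 2 ^ k ∉ S := fun h =>
    (hS _ h).1.ne_one ((Nat.coprime_self _).mp (hcop _ h))
  let a : ℕ → ℕ := fun m => if m ∈ S then (r m).val else c
  have hne : ∀ m ∈ insert (2 ^ k) S, id m ≠ 0 := by
    simp only [Finset.mem_insert, id]
    rintro m (rfl | hm)
    · positivity
    · exact (hS m hm).1.ne_zero
  have hpairwise : Set.Pairwise (insert (2 ^ k) S : Finset ℕ) (Function.onFun Nat.Coprime id) := by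
    rw [Finset.coe_insert]
    refine Set.pairwise_insert.mpr ⟨fun p hp q hq hpq => ?_, fun p hp _ => ⟨hcop p hp, ?_⟩⟩
    · exact (Nat.coprime_primes (hS p hp).1 (hS q hq).1).mpr hpq
    · exact (hcop p hp).symm
  let L := Nat.chineseRemainderOfFinset a id (insert (2 ^ k) S) hne hpairwise
  have hL := L.prop
  refine ⟨L, ?_, ?_, fun p hp hp2 => ?_⟩
  · have hprod : ∏ p ∈ S, p ≤ n := Nat.le_of_dvd (Nat.pos_of_ne_zero hn)
      ((Finset.prod_dvd_prod_of_subset _ _ _ (Finset.erase_subset _ _)).trans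
        (Nat.prod_primeFactors_dvd n))
    calc L < ∏ m ∈ insert (2 ^ k) S, id m :=
          Nat.chineseRemainderOfFinset_lt_prod a id hne hpairwise
      _ = 2 ^ k * ∏ p ∈ S, p := Finset.prod_insert hpowS
      _ ≤ 2 ^ k * n := Nat.mul_le_mul_left _ hprod
  · simpa [a, hpowS] using hL (2 ^ k) (Finset.mem_insert_self _ _)
  · have hpS : p ∈ S := Finset.mem_erase.mpr ⟨hp2, hp⟩
    have : NeZero p := ⟨(hS p hpS).1.ne_zero⟩
    have hLp := (ZMod.natCast_eq_natCast_iff _ _ _).mpr (hL p (Finset.mem_insert_of_mem hpS))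
    simpa [a, hpS] using hLp

theorem exists_heegner_residue_general (D N : ℕ) (hDpos : 0 < D) (hNpos : 0 < N)
    (hgcd : Nat.gcd D N = 1) :
    ∃ L : ℕ, 0 < L ∧ L < 8 * D * N ∧
      (∀ p : ℕ, (hp : p.Prime) → Odd p → p ∣ D → @legendreSym p ⟨hp⟩ (L : ℤ) = -1) ∧
      (∀ p : ℕ, (hp : p.Prime) → Odd p → p ∣ N → @legendreSym p ⟨hp⟩ (L : ℤ) = 1) ∧
      (2 ∣ D → L % 8 = 5) ∧ (¬ 2 ∣ D → L % 8 = 1) := by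
  classical
  let r : (p : ℕ) → ZMod p := fun p =>
    if p ∣ D then Classical.epsilon (fun x => ¬IsSquare x) else 1
  obtain ⟨L, hLlt, hL8, hLr⟩ := exists_lt_two_pow_mul_modEq_and_natCast_eq (D * N) 3
    (if 2 ∣ D then 5 else 1) (by positivity) r
  have hL8 : L % 8 = if 2 ∣ D then 5 else 1 := by split_ifs at hL8 ⊢ <;> exact hL8
  have hLp : ∀ p, p.Prime → Odd p → p ∣ D * N → (L : ZMod p) = r p := fun p hp hodd hpDN =>
    hLr p (Nat.mem_primeFactors.mpr ⟨hp, hpDN, by positivity⟩) (hodd.ne_two_of_dvd_nat dvd_rfl)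
  refine ⟨L, by split_ifs at hL8 <;> omega, by linarith, fun p hp hodd hpD => ?_,
    fun p hp hodd hpN => ?_, fun h => by simpa [h] using hL8, fun h => by simpa [h] using hL8⟩
  · have := Fact.mk hp
    have hnonsq : ∃ x : ZMod p, ¬IsSquare x := FiniteField.exists_nonsquare (by
      rw [ZMod.ringChar_zmod_n]; exact hodd.ne_two_of_dvd_nat dvd_rfl)
    rw [legendreSym.eq_neg_one_iff', hLp p hp hodd (dvd_mul_of_dvd_left hpD N)]
    simpa [r, hpD] using Classical.epsilon_spec hnonsq
  · have := Fact.mk hp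
    have hpD : ¬ p ∣ D := fun hpD => hp.not_dvd_one (hgcd ▸ Nat.dvd_gcd hpD hpN)
    have hL1 : (L : ZMod p) = 1 := by
      simpa [r, hpD] using hLp p hp hodd (dvd_mul_of_dvd_right hpN D)
    rw [legendreSym.eq_one_iff' p (by simp [hL1]), hL1]
    exact IsSquare.one

/-- For `D` a squarefree positive integer with an even number of distinct
prime factors and `N` a positive integer coprime to `D`, there is a positive integer
`L < 8DN` with `(L|p) = -1` for all odd primes `p ∣ D`, `(L|p) = 1` for all odd primes
`p ∣ N`, and `L ≡ 5 (mod 8)` if `D` is even while `L ≡ 1 (mod 8)` if `D` is odd. -/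
theorem exists_heegner_residue (D N : ℕ) (hDpos : 0 < D) (hDsf : Squarefree D)
    (hDeven : Even D.primeFactors.card) (hNpos : 0 < N) (hgcd : Nat.gcd D N = 1) :
    ∃ L : ℕ, 0 < L ∧ L < 8 * D * N ∧
      (∀ p : ℕ, (hp : p.Prime) → Odd p → p ∣ D → @legendreSym p ⟨hp⟩ (L : ℤ) = -1) ∧
      (∀ p : ℕ, (hp : p.Prime) → Odd p → p ∣ N → @legendreSym p ⟨hp⟩ (L : ℤ) = 1) ∧
      (2 ∣ D → L % 8 = 5) ∧ (¬ 2 ∣ D → L % 8 = 1) :=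
  exists_heegner_residue_general D N hDpos hNpos hgcd
end

section
/- Let D be a squarefree positive integer with an even number of distinct prime factors and let N be a positive integer with gcd(D, N) = 1. Then there exists an integer d with −16DN < d < −8DN such that d ≡ 1 (mod 4) and d satisfies the (D, N) Heegner hypothesis. -/
/-- An integer `d` satisfies the `(D, N)` Heegner hypothesis if `(d|p) = -1` for every
odd prime `p ∣ D` (with `d ≡ 5 (mod 8)` if `2 ∣ D`), and `(d|p) = 1` for every odd
prime `p ∣ N` (with `d ≡ 1 (mod 8)` if `2 ∣ N`). -/
def SatisfiesHeegnerHypothesis (D N : ℕ) (d : ℤ) : Prop :=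
  (∀ p : ℕ, (hp : p.Prime) → Odd p → p ∣ D → @legendreSym p ⟨hp⟩ d = -1) ∧
  (2 ∣ D → d % 8 = 5) ∧
  (∀ p : ℕ, (hp : p.Prime) → Odd p → p ∣ N → @legendreSym p ⟨hp⟩ d = 1) ∧
  (2 ∣ N → d % 8 = 1)

private lemma legendre_congr {p : ℕ} [Fact p.Prime] {a b : ℤ} (h : a ≡ b [ZMOD p]) :
    legendreSym p a = legendreSym p b := by
  unfold legendreSym
  rw [(ZMod.intCast_eq_intCast_iff a b p).mpr h]

/-- Integer CRT for coprime moduli. -/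
private lemma crt_int (m n : ℕ) (h : Nat.Coprime m n) (a b : ℤ) :
    ∃ c : ℤ, c ≡ a [ZMOD m] ∧ c ≡ b [ZMOD n] := by
  have hbez : (Nat.gcd m n : ℤ) = m * Nat.gcdA m n + n * Nat.gcdB m n := Nat.gcd_eq_gcd_ab m n
  rw [h] at hbez
  refine ⟨a * (n * Nat.gcdB m n) + b * (m * Nat.gcdA m n), ?_, ?_⟩
  · rw [Int.modEq_iff_dvd]
    exact ⟨a * Nat.gcdA m n - b * Nat.gcdA m n, by linear_combination a * hbez⟩
  · rw [Int.modEq_iff_dvd]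
    exact ⟨b * Nat.gcdB m n - a * Nat.gcdB m n, by linear_combination b * hbez⟩

/-- For odd squarefree `m` there is an integer which is a nonresidue mod every
prime divisor of `m`. -/
private lemma exists_nonresidue (m : ℕ) (hm : Squarefree m) (hodd : ¬ 2 ∣ m) :
    ∃ a : ℤ, ∀ p : ℕ, (hp : p.Prime) → p ∣ m → @legendreSym p ⟨hp⟩ a = -1 := by
  induction m using Nat.strong_induction_on with
  | _ m ih =>
    rcases eq_or_ne m 1 with rfl | hne
    · exact ⟨0, fun p hp hpd => absurd (Nat.eq_one_of_dvd_one hpd) hp.ne_one⟩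
    have hm0 : m ≠ 0 := hm.ne_zero
    obtain ⟨p, hp, hpd⟩ := Nat.exists_prime_and_dvd hne
    obtain ⟨k, hk⟩ := hpd
    have hpne2 : p ≠ 2 := by rintro rfl; exact hodd ⟨k, hk⟩
    have hsf := hk ▸ hm
    rw [Nat.squarefree_mul_iff] at hsf
    obtain ⟨hcop, hsfp, hsfk⟩ := hsf
    have hk0 : k ≠ 0 := by rintro rfl; exact hm0 (by simpa using hk)
    have hklt : k < m := by
      rw [hk]
      exact lt_mul_of_one_lt_left (Nat.pos_of_ne_zero hk0) hp.one_lt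
    have hkodd : ¬ 2 ∣ k := fun h => hodd (hk ▸ h.mul_left p)
    obtain ⟨a', ha'⟩ := ih k hklt hsfk hkodd
    haveI : Fact p.Prime := ⟨hp⟩
    have hchar : ringChar (ZMod p) ≠ 2 := by
      rw [ZMod.ringChar_zmod_n]; exact hpne2
    obtain ⟨b, hb⟩ := FiniteField.exists_nonsquare (F := ZMod p) hchar
    have hbcast : ((b.val : ℤ) : ZMod p) = b := by
      push_cast
      simp [ZMod.natCast_val, ZMod.cast_id]
    obtain ⟨c, hc1, hc2⟩ := crt_int p k hcop (b.val : ℤ) a'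
    refine ⟨c, fun q hq hqd => ?_⟩
    haveI : Fact q.Prime := ⟨hq⟩
    rcases (Nat.Prime.dvd_mul hq).mp (hk ▸ hqd) with hqp | hqk
    · obtain rfl := (Nat.prime_dvd_prime_iff_eq hq hp).mp hqp
      rw [legendre_congr hc1, legendreSym.eq_neg_one_iff, hbcast]
      exact hb
    · rw [legendre_congr (hc2.of_dvd (Int.natCast_dvd_natCast.mpr hqk))]
      exact ha' q hq hqk

/-- For `D` a squarefree positive integer with an even number of distinct
prime factors and `N` a positive integer coprime to `D`, there is an integer `d` with
`-16DN < d < -8DN`, `d ≡ 1 (mod 4)`, satisfying the `(D, N)` Heegner hypothesis. -/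
theorem exists_heegner_discriminant (D N : ℕ) (hDpos : 0 < D) (hDsf : Squarefree D)
    (hDeven : Even D.primeFactors.card) (hNpos : 0 < N) (hgcd : Nat.gcd D N = 1) :
    ∃ d : ℤ, -16 * D * N < d ∧ d < -8 * D * N ∧ d % 4 = 1 ∧
      SatisfiesHeegnerHypothesis D N d := by
  -- odd parts of D and N
  set D2 := ordCompl[2] D with hD2def
  set N2 := ordCompl[2] N with hN2def
  have hD2dvd : D2 ∣ D := Nat.ordCompl_dvd D 2
  have hN2dvd : N2 ∣ N := Nat.ordCompl_dvd N 2
  have hD2odd : ¬ 2 ∣ D2 := Nat.not_dvd_ordCompl Nat.prime_two hDpos.ne'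
  have hN2odd : ¬ 2 ∣ N2 := Nat.not_dvd_ordCompl Nat.prime_two hNpos.ne'
  have hD2sf : Squarefree D2 := hDsf.squarefree_of_dvd hD2dvd
  -- odd primes dividing D (resp. N) divide D2 (resp. N2)
  have hodd_dvd : ∀ (M : ℕ), 0 < M → ∀ p : ℕ, p.Prime → Odd p → p ∣ M →
      p ∣ ordCompl[2] M := by
    intro M hM p hp hpodd hpd
    have hpne2 : p ≠ 2 := by
      rintro rfl; exact (Nat.not_odd_iff_even.mpr even_two) hpodd
    have hcop : Nat.Coprime p (2 ^ M.factorization 2) :=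
      Nat.Coprime.pow_right _ ((Nat.coprime_primes hp Nat.prime_two).mpr hpne2)
    have := Nat.ordProj_mul_ordCompl_eq_self M 2
    exact hcop.dvd_of_dvd_mul_left (by rwa [this])
  -- coprimality facts
  have hcop2D2 : Nat.Coprime 2 D2 := (Nat.Prime.coprime_iff_not_dvd Nat.prime_two).mpr hD2odd
  have hcop2N2 : Nat.Coprime 2 N2 := (Nat.Prime.coprime_iff_not_dvd Nat.prime_two).mpr hN2odd
  have hcop8D2 : Nat.Coprime 8 D2 := by
    have : (8 : ℕ) = 2 ^ 3 := by norm_num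
    rw [this]; exact hcop2D2.pow_left 3
  have hcopDN : Nat.Coprime D N := hgcd
  have hcopD2N2 : Nat.Coprime D2 N2 :=
    Nat.Coprime.coprime_dvd_left hD2dvd (Nat.Coprime.coprime_dvd_right hN2dvd hcopDN)
  have hcop8D2N2 : Nat.Coprime (8 * D2) N2 := by
    refine Nat.Coprime.mul ?_ hcopD2N2
    have : (8 : ℕ) = 2 ^ 3 := by norm_num
    rw [this]; exact hcop2N2.pow_left 3
  -- the residue at 8
  set c0 : ℤ := if 2 ∣ D then 5 else 1 with hc0def
  -- nonresidue mod all primes of D2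
  obtain ⟨a, ha⟩ := exists_nonresidue D2 hD2sf hD2odd
  obtain ⟨r1, hr18, hr1D2⟩ := crt_int 8 D2 hcop8D2 c0 a
  obtain ⟨r, hr8D2, hrN2⟩ := crt_int (8 * D2) N2 hcop8D2N2 r1 1
  have hr8 : r ≡ c0 [ZMOD 8] :=
    (hr8D2.of_dvd (by exact_mod_cast (dvd_mul_right 8 D2))).trans hr18
  have hrD2 : r ≡ a [ZMOD D2] :=
    (hr8D2.of_dvd (by exact_mod_cast (dvd_mul_left D2 8))).trans hr1D2
  -- the length of the interval
  set L : ℤ := 8 * D * N with hLdef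
  have hLpos : 0 < L := by positivity
  have h8L : (8 : ℤ) ∣ L := ⟨(D : ℤ) * N, by ring⟩
  have hD2L : (D2 : ℤ) ∣ L := by
    obtain ⟨t, ht⟩ := hD2dvd
    exact ⟨8 * t * N, by rw [hLdef, ht]; push_cast; ring⟩
  have hN2L : (N2 : ℤ) ∣ L := by
    obtain ⟨t, ht⟩ := hN2dvd
    exact ⟨8 * D * t, by rw [hLdef, ht]; push_cast; ring⟩
  -- the discriminant
  have hdr : r % L - 16 * D * N ≡ r [ZMOD L] := by
    rw [Int.modEq_iff_dvd]
    have h16 : (16 : ℤ) * D * N = 2 * L := by rw [hLdef]; ring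
    refine ⟨r / L + 2, ?_⟩
    rw [Int.emod_def]
    linarith [h16]
  refine ⟨r % L - 16 * D * N, ?_, ?_, ?_, ?_, ?_, ?_, ?_⟩
  · -- lower bound
    have hne : r % L ≠ 0 := by
      intro h0
      have hLr : L ∣ r := Int.dvd_of_emod_eq_zero h0
      have h8r : (8 : ℤ) ∣ r := dvd_trans h8L hLr
      have hz : r % 8 = 0 := Int.emod_eq_zero_of_dvd h8r
      have hc : r % 8 = c0 % 8 := hr8
      rw [hc0def] at hc
      split at hc <;> omega
    have : 0 < r % L := lt_of_le_of_ne (Int.emod_nonneg r hLpos.ne') (Ne.symm hne)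
    have hL16 : -16 * (D : ℤ) * N = -(2 * L) := by rw [hLdef]; ring
    linarith
  · -- upper bound
    have : r % L < L := Int.emod_lt_of_pos r hLpos
    have hL8 : -8 * (D : ℤ) * N = -L := by rw [hLdef]; ring
    linarith
  · -- d % 4 = 1
    have h8' : (r % L - 16 * D * N) % 8 = c0 % 8 := (hdr.of_dvd h8L).trans hr8
    rw [hc0def] at h8'
    split at h8' <;> omega
  · -- nonresidue at odd primes of D
    intro p hp hpodd hpd
    haveI : Fact p.Prime := ⟨hp⟩
    have hpD2 : p ∣ D2 := hodd_dvd D hDpos p hp hpodd hpd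
    have hda : r % L - 16 * D * N ≡ a [ZMOD p] :=
      ((hdr.of_dvd (dvd_trans (Int.natCast_dvd_natCast.mpr hpD2) hD2L)).trans
        (hrD2.of_dvd (Int.natCast_dvd_natCast.mpr hpD2)))
    rw [legendre_congr hda]
    exact ha p hp hpD2
  · -- 2 ∣ D → d % 8 = 5
    intro h2D
    have h8' : (r % L - 16 * D * N) % 8 = c0 % 8 := (hdr.of_dvd h8L).trans hr8
    rw [hc0def, if_pos h2D] at h8'
    omega
  · -- residue at odd primes of N
    intro p hp hpodd hpd
    haveI : Fact p.Prime := ⟨hp⟩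
    have hpN2 : p ∣ N2 := hodd_dvd N hNpos p hp hpodd hpd
    have hd1 : r % L - 16 * D * N ≡ 1 [ZMOD p] :=
      ((hdr.of_dvd (dvd_trans (Int.natCast_dvd_natCast.mpr hpN2) hN2L)).trans
        (hrN2.of_dvd (Int.natCast_dvd_natCast.mpr hpN2)))
    rw [legendre_congr hd1]
    exact legendreSym.at_one p
  · -- 2 ∣ N → d % 8 = 1
    intro h2N
    have h2D : ¬ 2 ∣ D := by
      intro h2D
      have : (2 : ℕ) ∣ Nat.gcd D N := Nat.dvd_gcd h2D h2N
      omega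
    have h8' : (r % L - 16 * D * N) % 8 = c0 % 8 := (hdr.of_dvd h8L).trans hr8
    rw [hc0def, if_neg h2D] at h8'
    omega
end

section
/- Let D be a squarefree positive integer with an even number of distinct prime factors and let N be a positive integer with gcd(D, N) = 1. Then there exists a fundamental discriminant d with −16DN < d < 0 which satisfies the (D, N) Heegner hypothesis. -/
/-- An integer `d` is a fundamental discriminant if either `d ≡ 1 (mod 4)` and `d` is
squarefree, or `d = 4m` with `m` squarefree and `m ≡ 2` or `3 (mod 4)`. -/
def IsFundamentalDiscriminant (d : ℤ) : Prop :=
  (d % 4 = 1 ∧ Squarefree d) ∨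
  (∃ m : ℤ, d = 4 * m ∧ Squarefree m ∧ (m % 4 = 2 ∨ m % 4 = 3))

/-! Choose `0 < n < 8DN` by the Chinese remainder theorem with `n ≡ 3` or `7 (mod 8)` according
as `2 ∤ N` or `2 ∣ N`, such that `-n` is a non-residue modulo every odd `p ∣ D` and a nonzero
residue modulo every odd `p ∣ N`. Writing `n = b²a` with `a` squarefree, `b` is odd and prime to
`DN`, so `d = -a` has the same residue mod 8 and the same Legendre symbols as `-n`. Thus `d`
is squarefree and `≡ 1 (mod 4)`, hence a fundamental discriminant, and `|d| ≤ n < 8DN`. -/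

theorem Int.sq_mul_emod_eight_of_odd {b : ℤ} (hb : Odd b) (d : ℤ) : b ^ 2 * d % 8 = d % 8 := by
  obtain ⟨k, rfl⟩ := hb
  obtain ⟨j, hj⟩ := Int.even_mul_succ_self k
  have hsq : (2 * k + 1) ^ 2 * d = d + 8 * (j * d) := by linear_combination 4 * d * hj
  rw [hsq, Int.add_mul_emod_self_left]

namespace legendreSym

variable {p : ℕ} [Fact p.Prime]

theorem congr_of_intCast_eq {a b : ℤ} (h : (a : ZMod p) = b) :
    legendreSym p a = legendreSym p b :=
  congrArg (quadraticChar (ZMod p)) h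

theorem sq_mul_of_ne_zero {b a : ℤ} (h : legendreSym p (b ^ 2 * a) ≠ 0) :
    legendreSym p (b ^ 2 * a) = legendreSym p a := by
  have hb : (b : ZMod p) ≠ 0 := fun hb =>
    h ((legendreSym.eq_zero_iff p _).mpr (by push_cast; simp [hb]))
  rw [legendreSym.mul, legendreSym.sq_one' p hb, one_mul]

theorem exists_eq (hp : p ≠ 2) {ε : ℤ} (hε : ε = 1 ∨ ε = -1) :
    ∃ x : ℤ, legendreSym p x = ε := by
  rcases hε with rfl | rfl
  · exact ⟨1, legendreSym.at_one p⟩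
  · obtain ⟨u, hu⟩ :=
      quadraticChar_exists_neg_one (F := ZMod p) (by rwa [ZMod.ringChar_zmod_n])
    refine ⟨(u.val : ℤ), ?_⟩
    rw [← hu, legendreSym, Int.cast_natCast, ZMod.natCast_zmod_val]

end legendreSym

theorem legendreSym.exists_forall_eq (ε : ℕ → ℤ) (hε : ∀ p, ε p = 1 ∨ ε p = -1) :
    ∃ x : ℕ → ℤ, ∀ p (hp : p.Prime), p ≠ 2 →
      @legendreSym p ⟨hp⟩ (x p) = ε p := by
  have hx (p : ℕ) : ∃ x : ℤ, ∀ (hp : p.Prime), p ≠ 2 →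
      @legendreSym p ⟨hp⟩ x = ε p := by
    by_cases hp : p.Prime ∧ p ≠ 2
    · have := Fact.mk hp.1
      obtain ⟨x, hx⟩ := legendreSym.exists_eq hp.2 (hε p)
      exact ⟨x, fun _ _ => hx⟩
    · exact ⟨0, fun h h2 => absurd ⟨h, h2⟩ hp⟩
  choose x hx using hx
  exact ⟨x, hx⟩

theorem SatisfiesHeegnerHypothesis.of_sq_mul {D N : ℕ} {b d : ℤ} (hb : Odd b)
    (h : SatisfiesHeegnerHypothesis D N (b ^ 2 * d)) : SatisfiesHeegnerHypothesis D N d := by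
  obtain ⟨hD, hD2, hN, hN2⟩ := h
  refine ⟨fun p hp hodd hpD => ?_, fun h2 => ?_, fun p hp hodd hpN => ?_, fun h2 => ?_⟩
  · have hχ := hD p hp hodd hpD
    rwa [@legendreSym.sq_mul_of_ne_zero p ⟨hp⟩ _ _ (by rw [hχ]; norm_num)] at hχ
  · rw [← Int.sq_mul_emod_eight_of_odd hb, hD2 h2]
  · have hχ := hN p hp hodd hpN
    rwa [@legendreSym.sq_mul_of_ne_zero p ⟨hp⟩ _ _ (by rw [hχ]; norm_num)] at hχ
  · rw [← Int.sq_mul_emod_eight_of_odd hb, hN2 h2]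

theorem exists_lt_eight_mul_prod_of_odd_primes (S : Finset ℕ)
    (hS : ∀ p ∈ S, p.Prime ∧ p ≠ 2) (r : ℕ) (u : (p : ℕ) → ZMod p) :
    ∃ n : ℕ, n < 8 * ∏ p ∈ S, p ∧ n % 8 = r % 8 ∧ ∀ p ∈ S, (n : ZMod p) = u p := by
  have h2S : 2 ∉ S := fun h => (hS 2 h).2 rfl
  have hprime : ∀ p ∈ insert 2 S, p.Prime := by
    simpa [Finset.forall_mem_insert, Nat.prime_two] using fun p hp => (hS p hp).1
  let e : ℕ → ℕ := fun p => if p = 2 then 3 else 1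
  let a : ℕ → ℕ := fun p => if p = 2 then r else (u p).val
  have hne : ∀ p ∈ insert 2 S, p ^ e p ≠ 0 := fun p hp => pow_ne_zero _ (hprime p hp).ne_zero
  have hcop :
      Set.Pairwise (insert 2 S : Finset ℕ) (Function.onFun Nat.Coprime fun p => p ^ e p) :=
    fun p hp q hq hpq => Nat.coprime_pow_primes _ _ (hprime p hp) (hprime q hq) hpq
  let n := Nat.chineseRemainderOfFinset a (fun p => p ^ e p) _ hne hcop
  have hn := n.2
  refine ⟨n, ?_, ?_, fun p hp => ?_⟩
  · calc (n : ℕ) < ∏ p ∈ insert 2 S, p ^ e p :=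
          Nat.chineseRemainderOfFinset_lt_prod a (fun p => p ^ e p) hne hcop
      _ = 8 * ∏ p ∈ S, p := by
          rw [Finset.prod_insert h2S]
          congr 1
          exact Finset.prod_congr rfl fun p hp => by
            rw [show e p = 1 from if_neg (hS p hp).2, pow_one]
  · simpa [a, e, Nat.ModEq] using hn 2 (Finset.mem_insert_self 2 S)
  · have : NeZero p := ⟨(hS p hp).1.ne_zero⟩
    have hnp := hn p (Finset.mem_insert_of_mem hp)
    simp only [a, e, (hS p hp).2, if_false, pow_one] at hnp
    rw [(ZMod.natCast_eq_natCast_iff _ _ _).mpr hnp, ZMod.natCast_zmod_val]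

theorem exists_nat_lt_satisfiesHeegnerHypothesis_neg {D N : ℕ} (hD : 0 < D) (hN : 0 < N)
    (hDN : D.Coprime N) :
    ∃ n : ℕ, n < 8 * (D * N) ∧ n % 4 = 3 ∧ SatisfiesHeegnerHypothesis D N (-n) := by
  obtain ⟨x, hx⟩ := legendreSym.exists_forall_eq (fun p => if p ∣ D then -1 else 1)
    fun p => by split_ifs <;> simp
  set S := (D * N).primeFactors.erase 2
  obtain ⟨n, hn_lt, hn8, hnS⟩ := exists_lt_eight_mul_prod_of_odd_primes S
    (fun p hp => ⟨Nat.prime_of_mem_primeFactors (Finset.mem_of_mem_erase hp),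
      Finset.ne_of_mem_erase hp⟩)
    (if 2 ∣ N then 7 else 3) (fun p => ((-x p : ℤ) : ZMod p))
  have hS_le : ∏ p ∈ S, p ≤ D * N :=
    Nat.le_of_dvd (Nat.mul_pos hD hN) ((Finset.prod_dvd_prod_of_subset _ _ _
      (Finset.erase_subset _ _)).trans (Nat.prod_primeFactors_dvd _))
  have hχ : ∀ p (hp : p.Prime), Odd p → p ∣ D * N →
      @legendreSym p ⟨hp⟩ (-n) = if p ∣ D then -1 else 1 := by
    intro p hp hodd hpDN
    have hp2 : p ≠ 2 := by rintro rfl; exact Nat.not_odd_iff_even.mpr even_two hodd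
    have := Fact.mk hp
    rw [← hx p hp hp2]
    refine legendreSym.congr_of_intCast_eq ?_
    have hpS : p ∈ S :=
      Finset.mem_erase.mpr ⟨hp2, Nat.mem_primeFactors.mpr ⟨hp, hpDN, by positivity⟩⟩
    push_cast
    rw [hnS p hpS, Int.cast_neg, neg_neg]
  have hND : ∀ p, p.Prime → p ∣ N → ¬ p ∣ D := fun p hp hpN hpD =>
    hp.ne_one (Nat.eq_one_of_dvd_coprimes hDN hpD hpN)
  refine ⟨n, by omega, by split_ifs at hn8 <;> omega, fun p hp hodd hpD => ?_, fun h2 => ?_,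
    fun p hp hodd hpN => ?_, fun h2 => ?_⟩
  · rw [hχ p hp hodd (dvd_mul_of_dvd_left hpD N), if_pos hpD]
  · rw [if_neg (hND 2 Nat.prime_two · h2)] at hn8
    omega
  · rw [hχ p hp hodd (dvd_mul_of_dvd_right hpN D), if_neg (hND p hp hpN)]
  · rw [if_pos h2] at hn8
    omega

theorem exists_fundamental_heegner_discriminant_general (D N : ℕ) (hDpos : 0 < D) (hNpos : 0 < N)
    (hgcd : Nat.gcd D N = 1) :
    ∃ d : ℤ, IsFundamentalDiscriminant d ∧ -16 * D * N < d ∧ d < 0 ∧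
      SatisfiesHeegnerHypothesis D N d := by
  obtain ⟨n, hn_lt, hn4, hn⟩ := exists_nat_lt_satisfiesHeegnerHypothesis_neg hDpos hNpos hgcd
  obtain ⟨a, b, hab, ha⟩ := Nat.sq_mul_squarefree n
  have hodd : Odd (b ^ 2 * a) := Nat.odd_iff.mpr (by omega)
  have hb : Odd (b : ℤ) := by
    exact_mod_cast (Nat.odd_pow_iff two_ne_zero).mp (Nat.Odd.of_mul_left hodd)
  have hsplit : -(n : ℤ) = (b : ℤ) ^ 2 * -(a : ℤ) := by rw [← hab]; push_cast; ring
  rw [hsplit] at hn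
  have ha_mod : -(a : ℤ) % 8 = -(n : ℤ) % 8 := by rw [hsplit, Int.sq_mul_emod_eight_of_odd hb]
  have ha_pos : 0 < a := Nat.pos_of_ne_zero fun h => by simp [h] at hab; omega
  have ha_lt : (a : ℤ) < 8 * (D * N) := by
    exact_mod_cast (Nat.le_of_dvd (by omega) (hab ▸ dvd_mul_left a _)).trans_lt hn_lt
  refine ⟨-a, Or.inl ⟨by omega, Int.squarefree_natAbs.mp (by simpa using ha)⟩, by linarith,
    by omega, hn.of_sq_mul hb⟩

/-- For `D` a squarefree positive integer with an even number of distinct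
prime factors and `N` a positive integer coprime to `D`, there is a fundamental
discriminant `d` with `-16DN < d < 0` satisfying the `(D, N)` Heegner hypothesis. -/
theorem exists_fundamental_heegner_discriminant (D N : ℕ) (hDpos : 0 < D)
    (hDsf : Squarefree D) (hDeven : Even D.primeFactors.card) (hNpos : 0 < N)
    (hgcd : Nat.gcd D N = 1) :
    ∃ d : ℤ, IsFundamentalDiscriminant d ∧ -16 * D * N < d ∧ d < 0 ∧
      SatisfiesHeegnerHypothesis D N d :=
  exists_fundamental_heegner_discriminant_general D N hDpos hNpos hgcd
end

section
/- For every real number x with x ≥ 5.60483·10^10, one has (4e/π)·√x·log(16x) ≤ (7x/1600)·(1/(e^γ·log(log x) + 3/log(log 6))) − (49/400)·√x. -/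
/-!
After division by `√x` the inequality reads
`(4e/π · log 16x + 49/400) · (e^γ log log x + 3 / log log 6) ≤ 7√x / 1600`,
which at the threshold holds with a relative margin of only about `4·10⁻⁵`.
Write `√x = 236745 (1 + v)²` with `v ≥ 0`. Concavity of `log` gives
`log √x ≤ log 236745 + 2v` and `log log x ≤ log (2ℓ) + 2v/ℓ` for `ℓ ≥ log 236745`,
so the left side is bounded by a quadratic in `v` whose coefficients are dominated by those of
`7 · 236745 (1 + v)² / 1600`. This needs every constant to about six digits: the logarithms are
reduced to `log 2`, `log 3`, `log 5` through `2(b - a)/(b + a) ≤ log b - log a` with a nearby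
`5`-smooth `a` or `b`, and `γ` is bounded by the decreasing sequence `H_n - log n - 1/(2(n + 1))`.
-/

open Real Filter Topology

namespace Real

theorem log_le_log_add_sub_div {a b : ℝ} (ha : 0 < a) (hb : 0 < b) :
    log b ≤ log a + (b - a) / a := by
  have h := log_le_sub_one_of_pos (div_pos hb ha)
  rw [log_div hb.ne' ha.ne'] at h
  rw [sub_div, div_self ha.ne']
  linarith

theorem two_mul_sub_div_add_le_log_sub_log {a b : ℝ} (ha : 0 < a) (hab : a ≤ b) :
    2 * (b - a) / (b + a) ≤ log b - log a := by
  have h := le_log_one_add_of_nonneg (x := b / a - 1) (by rwa [sub_nonneg, one_le_div ha])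
  rw [add_sub_cancel, log_div (by linarith) ha.ne'] at h
  convert h using 1
  field_simp
  ring

theorem log_le_log_add_two_mul_sqrt_div_sub_one {a b : ℝ} (ha : 0 < a) (hb : 0 < b) :
    log b ≤ log a + 2 * (√(b / a) - 1) := by
  have h := log_le_sub_one_of_pos (sqrt_pos.2 (div_pos hb ha))
  rw [log_sqrt (div_pos hb ha).le, log_div hb.ne' ha.ne'] at h
  linarith

/-- Exceeds `γ` by about `5 / (12 n²)`, so `n = 128` already pins `γ` down to `3·10⁻⁵`. -/
noncomputable def eulerMascheroniSeqUpper (n : ℕ) : ℝ :=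
  harmonic n - log n - 1 / (2 * (n + 1))

theorem eulerMascheroniSeqUpper_succ_le {n : ℕ} (hn : 1 ≤ n) :
    eulerMascheroniSeqUpper (n + 1) ≤ eulerMascheroniSeqUpper n := by
  have hn' : (1 : ℝ) ≤ n := by exact_mod_cast hn
  have hlog := two_mul_sub_div_add_le_log_sub_log (a := n) (b := n + 1) (by linarith) (by linarith)
  have hrat : ((n : ℝ) + 1)⁻¹ - 1 / (2 * (n + 1 + 1)) + 1 / (2 * (n + 1)) ≤
      2 * ((n + 1) - n) / ((n + 1) + n) := by
    field_simp
    nlinarith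
  simp only [eulerMascheroniSeqUpper, harmonic_succ]
  push_cast
  linarith

theorem tendsto_eulerMascheroniSeqUpper :
    Tendsto eulerMascheroniSeqUpper atTop (𝓝 eulerMascheroniConstant) := by
  have h : Tendsto (fun n : ℕ ↦ 1 / (2 * ((n : ℝ) + 1))) atTop (𝓝 0) := by
    simpa [mul_comm] using (tendsto_one_div_add_atTop_nhds_zero_nat.const_mul (1 / 2 : ℝ))
  have hsub := tendsto_harmonic_sub_log.sub h
  rw [sub_zero] at hsub
  exact hsub

theorem eulerMascheroniConstant_le_eulerMascheroniSeqUpper {n : ℕ} (hn : 1 ≤ n) :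
    eulerMascheroniConstant ≤ eulerMascheroniSeqUpper n := by
  have hanti : AntitoneOn eulerMascheroniSeqUpper (Set.Ici 1) :=
    antitoneOn_nat_Ici_of_succ_le fun _ hm ↦ eulerMascheroniSeqUpper_succ_le hm
  exact le_of_tendsto tendsto_eulerMascheroniSeqUpper
    (eventually_atTop.2 ⟨n, fun m hm ↦ hanti hn (hn.trans hm) hm⟩)

end Real

theorem eulerMascheroniConstant_le : eulerMascheroniConstant ≤ 0.577241 := by
  have hH : (harmonic 128 : ℝ) ≤ 54331471 / 10 ^ 7 := by
    have h : harmonic 128 ≤ (54331471 / 10 ^ 7 : ℚ) := by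
      simp only [harmonic, Finset.sum_range_succ, Finset.sum_range_zero]
      norm_num
    have hR := (Rat.cast_le (K := ℝ)).2 h
    rwa [Rat.cast_div, Rat.cast_pow, Rat.cast_ofNat, Rat.cast_ofNat] at hR
  have hlog : log (128 : ℕ) = 7 * log 2 := by
    rw [show ((128 : ℕ) : ℝ) = 2 ^ 7 by norm_num, log_pow]
    norm_num
  have h := eulerMascheroniConstant_le_eulerMascheroniSeqUpper (n := 128) (by norm_num)
  rw [eulerMascheroniSeqUpper, hlog] at h
  norm_num at h
  linarith [log_two_gt_d9]

theorem log_sixteen_ninths_eq : log (16 / 9) = 4 * log 2 - 2 * log 3 := by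
  rw [log_div (by norm_num) (by norm_num), show (16 : ℝ) = 2 ^ 4 by norm_num,
    show (9 : ℝ) = 3 ^ 2 by norm_num, log_pow, log_pow]
  norm_num

theorem exp_eulerMascheroniConstant_le : exp eulerMascheroniConstant ≤ 1.78112 := by
  rw [← le_log_iff_exp_le (by norm_num)]
  have h := two_mul_sub_div_add_le_log_sub_log (a := 16 / 9) (b := 1.78112) (by norm_num)
    (by norm_num)
  rw [log_sixteen_ninths_eq] at h
  linarith [eulerMascheroniConstant_le, log_two_gt_d9, log_three_lt_d9]

theorem four_mul_exp_one_div_pi_le : 4 * exp 1 / π ≤ 3.46103 := by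
  rw [div_le_iff₀ pi_pos]
  linarith [exp_one_lt_d9, pi_gt_d6]

theorem log_236745_le : log 236745 ≤ 12.37474 := by
  have h := two_mul_sub_div_add_le_log_sub_log (a := 236745) (b := 2 ^ 7 * 3 * 5 ^ 4)
    (by norm_num) (by norm_num)
  rw [log_mul (by norm_num) (by norm_num), log_mul (by norm_num) (by norm_num), log_pow,
    log_pow] at h
  norm_num at h
  linarith [log_two_lt_d9, log_three_lt_d9, log_five_lt_d9]

theorem log_two_mul_12_37474_le : log (2 * 12.37474) ≤ 3.20881 := by
  have h := two_mul_sub_div_add_le_log_sub_log (a := 2 * 12.37474) (b := 5 ^ 2)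
    (by norm_num) (by norm_num)
  rw [log_pow] at h
  norm_num at h ⊢
  linarith [log_five_lt_d9]

theorem le_log_log_six : 0.583197 ≤ log (log 6) := by
  have hlog6 : 1.7917594 ≤ log 6 := by
    rw [show (6 : ℝ) = 2 * 3 by norm_num, log_mul (by norm_num) (by norm_num)]
    linarith [log_two_gt_d9, log_three_gt_d9]
  have h := two_mul_sub_div_add_le_log_sub_log (a := 16 / 9) (b := 1.7917594) (by norm_num)
    (by norm_num)
  rw [log_sixteen_ninths_eq] at h
  linarith [log_le_log (by norm_num) hlog6, log_two_gt_d9, log_three_lt_d9]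

theorem three_div_log_log_six_le : 3 / log (log 6) ≤ 5.14406 := by
  rw [div_le_iff₀ (by linarith [le_log_log_six])]
  linarith [le_log_log_six]

theorem log_le_of_236745_le {s : ℝ} (hs : 236745 ≤ s) :
    log s ≤ 12.37474 + 2 * (√(s / 236745) - 1) := by
  linarith [log_le_log_add_two_mul_sqrt_div_sub_one (a := 236745) (b := s) (by norm_num)
    (by linarith), log_236745_le]

theorem log_sixteen_mul_le {x L v : ℝ} (hx : 0 < x) (hlogx : log x = 2 * L)
    (hL : L ≤ 12.37474 + 2 * v) :
    log (16 * x) ≤ 4 * 0.6931471808 + 2 * (12.37474 + 2 * v) := by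
  rw [log_mul (by norm_num) hx.ne', hlogx, show (16 : ℝ) = 2 ^ 4 by norm_num, log_pow]
  linarith [log_two_lt_d9]

theorem log_log_le {x L v : ℝ} (hlogx : log x = 2 * L) (hL : L ≤ 12.37474 + 2 * v)
    (hL0 : 0 < L) :
    log (log x) ≤ 3.20881 + 2 * v / 12.37474 := by
  have h := log_le_log_add_sub_div (a := 2 * 12.37474) (b := log x) (by norm_num)
    (by linarith)
  have hdiv : (log x - 2 * 12.37474) / (2 * 12.37474) ≤ 2 * v / 12.37474 := by
    rw [div_le_div_iff₀ (by norm_num) (by norm_num)]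
    linarith
  linarith [log_two_mul_12_37474_le]

theorem sporadic_quadratic_le {v : ℝ} (hv : 0 ≤ v) :
    (3.46103 * (4 * 0.6931471808 + 2 * (12.37474 + 2 * v)) + 49 / 400) *
      (1.78112 * (3.20881 + 2 * v / 12.37474) + 5.14406) ≤ 7 * (236745 * (1 + v) ^ 2) / 1600 := by
  ring_nf
  linarith [sq_nonneg v]

/-- For every real `x ≥ 5.60483·10^10`,
`(4e/π)√x log(16x) ≤ (7x/1600)(1/(e^γ log log x + 3/log log 6)) - (49/400)√x`. -/
theorem sporadic_inequality (x : ℝ) (hx : 5.60483 * 10 ^ 10 ≤ x) :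
    4 * Real.exp 1 / Real.pi * Real.sqrt x * Real.log (16 * x) ≤
      7 * x / 1600 *
        (1 / (Real.exp Real.eulerMascheroniConstant * Real.log (Real.log x) +
          3 / Real.log (Real.log 6))) -
      49 / 400 * Real.sqrt x := by
  have hx0 : 0 < x := by linarith
  have hs : 236745 ≤ √x := le_sqrt_of_sq_le (by linarith)
  set v := √(√x / 236745) - 1 with hv_def
  have hv : 0 ≤ v := sub_nonneg.2 (one_le_sqrt.2 ((one_le_div (by norm_num)).2 hs))
  have hsv : √x = 236745 * (1 + v) ^ 2 := by
    rw [hv_def, add_sub_cancel, sq_sqrt (by positivity)]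
    ring
  have hlogx : log x = 2 * log √x := by
    rw [log_sqrt hx0.le]
    ring
  have hlog_sqrt_one : 1 ≤ log √x := by
    rw [le_log_iff_exp_le (by positivity)]
    linarith [exp_one_lt_d9]
  have hloglogx : 0 ≤ log (log x) := log_nonneg (by linarith)
  have hA : 4 * exp 1 / π * log (16 * x) + 49 / 400 ≤
      3.46103 * (4 * 0.6931471808 + 2 * (12.37474 + 2 * v)) + 49 / 400 := by
    gcongr
    · exact log_nonneg (by linarith)
    · exact four_mul_exp_one_div_pi_le
    · exact log_sixteen_mul_le hx0 hlogx (log_le_of_236745_le hs)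
  have hB : exp eulerMascheroniConstant * log (log x) + 3 / log (log 6) ≤
      1.78112 * (3.20881 + 2 * v / 12.37474) + 5.14406 := by
    gcongr
    · exact exp_eulerMascheroniConstant_le
    · exact log_log_le hlogx (log_le_of_236745_le hs) (by linarith)
    · exact three_div_log_log_six_le
  have hD : 0 < exp eulerMascheroniConstant * log (log x) + 3 / log (log 6) := by
    have := le_log_log_six
    positivity
  rw [mul_one_div, le_sub_iff_add_le, le_div_iff₀ hD]
  calc (4 * exp 1 / π * √x * log (16 * x) + 49 / 400 * √x) *
        (exp eulerMascheroniConstant * log (log x) + 3 / log (log 6))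
      = √x * ((4 * exp 1 / π * log (16 * x) + 49 / 400) *
        (exp eulerMascheroniConstant * log (log x) + 3 / log (log 6))) := by ring
    _ ≤ √x * (7 * √x / 1600) := by
      grw [hA, hB, sporadic_quadratic_le hv, ← hsv]
    _ = 7 * x / 1600 := by linear_combination (7 / 1600) * mul_self_sqrt hx0.le
end
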